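/- In a symmetric n-player game on a compact convex strategy set T with continuous payoffs quasi-concave in own strategy, there exists a symmetric Nash equilibrium: some t* ∈ T with u_1(t*, t*, …, t*) = max_{t∈T} u_1(t, t*, …, t*). -/

import Mathlib

/-!
Let `G` be the graph of the best-response correspondence `s ↦ argmax_{t ∈ T} h s t`, where
`h s t` is the payoff for playing `t` against everyone else playing `s`; it is compact. The
strategies having a best response `≤ s`, resp. `≥ s`, form two closed sets (projections of
compact pieces of `G`) which cover `T`; the first contains `max T` and the second `min T`, so by
connectedness of `T` some `s` lies in both. Quasi-concavity makes the best-response set at `s`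
convex, and it contains points on both sides of `s`, hence `s` itself.
-/

open Function Set

theorem QuasiconcaveOn.convex_setOf_isMaxOn {𝕜 E β : Type*} [Semiring 𝕜] [PartialOrder 𝕜]
    [AddCommMonoid E] [SMul 𝕜 E] [Preorder β] {s : Set E} {f : E → β}
    (hf : QuasiconcaveOn 𝕜 s f) : Convex 𝕜 {x ∈ s | IsMaxOn f s x} := by
  rcases eq_empty_or_nonempty {x ∈ s | IsMaxOn f s x} with hempty | ⟨x₀, hx₀s, hx₀⟩
  · exact hempty ▸ convex_empty
  · convert hf (f x₀) using 1
    ext x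
    refine and_congr_right fun hx => ⟨fun hmax => hmax hx₀s, fun hle y hy => ?_⟩
    exact (hx₀ hy).trans hle

section BestResponse

variable {α : Type*} [TopologicalSpace α] {T : Set α} {h : α → α → ℝ}

def bestResponseGraph (T : Set α) (h : α → α → ℝ) : Set (α × α) :=
  {p | p.1 ∈ T ∧ p.2 ∈ T ∧ IsMaxOn (h p.1) T p.2}

theorem isCompact_bestResponseGraph [T2Space α] (hT : IsCompact T)
    (hh : ContinuousOn (uncurry h) (T ×ˢ T)) : IsCompact (bestResponseGraph T h) := by
  have hG : bestResponseGraph T h =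
      (T ×ˢ T) ∩ ⋂ t ∈ T, {p ∈ T ×ˢ T | h p.1 t ≤ h p.1 p.2} := by
    ext p
    simp only [bestResponseGraph, isMaxOn_iff, mem_inter_iff, mem_prod, mem_iInter]
    exact ⟨fun ⟨h₁, h₂, hmax⟩ => ⟨⟨h₁, h₂⟩, fun t ht => ⟨⟨h₁, h₂⟩, hmax t ht⟩⟩,
      fun ⟨hp, hmax⟩ => ⟨hp.1, hp.2, fun t ht => (hmax t ht).2⟩⟩
  have hclosed : IsClosed (bestResponseGraph T h) := by
    rw [hG]
    refine (hT.isClosed.prod hT.isClosed).inter (isClosed_biInter fun t ht => ?_)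
    refine (hT.isClosed.prod hT.isClosed).isClosed_le ?_ hh
    exact hh.comp (continuous_fst.prodMk continuous_const).continuousOn fun p hp => ⟨hp.1, ht⟩
  exact (hT.prod hT).of_isClosed_subset hclosed fun p hp => ⟨hp.1, hp.2.1⟩

theorem exists_mem_bestResponseGraph (hT : IsCompact T) (hh : ContinuousOn (uncurry h) (T ×ˢ T))
    {s : α} (hs : s ∈ T) : ∃ t, (s, t) ∈ bestResponseGraph T h := by
  have hcont : ContinuousOn (h s) T :=
    hh.comp (continuous_const.prodMk continuous_id).continuousOn fun t ht => ⟨hs, ht⟩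
  obtain ⟨t, ht, hmax⟩ := hT.exists_isMaxOn ⟨s, hs⟩ hcont
  exact ⟨t, hs, ht, hmax⟩

theorem exists_bestResponse_le_and_ge [LinearOrder α] [OrderClosedTopology α]
    (hne : T.Nonempty) (hT : IsCompact T) (hconn : IsPreconnected T)
    (hh : ContinuousOn (uncurry h) (T ×ˢ T)) :
    ∃ s ∈ T, (∃ t ≤ s, (s, t) ∈ bestResponseGraph T h) ∧
      ∃ t ≥ s, (s, t) ∈ bestResponseGraph T h := by
  have hG := isCompact_bestResponseGraph hT hh
  set A := Prod.fst '' (bestResponseGraph T h ∩ {p | p.2 ≤ p.1})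
  set B := Prod.fst '' (bestResponseGraph T h ∩ {p | p.1 ≤ p.2})
  have hA : IsClosed A :=
    ((hG.inter_right (isClosed_le continuous_snd continuous_fst)).image continuous_fst).isClosed
  have hB : IsClosed B :=
    ((hG.inter_right (isClosed_le continuous_fst continuous_snd)).image continuous_fst).isClosed
  have hcover : T ⊆ A ∪ B := by
    intro s hs
    obtain ⟨t, hst⟩ := exists_mem_bestResponseGraph hT hh hs
    rcases le_total t s with hts | hst'
    · exact Or.inl ⟨(s, t), ⟨hst, hts⟩, rfl⟩
    · exact Or.inr ⟨(s, t), ⟨hst, hst'⟩, rfl⟩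
  have hTA : (T ∩ A).Nonempty := by
    obtain ⟨b, hb, hbmax⟩ := hT.exists_isGreatest hne
    obtain ⟨t, hbt⟩ := exists_mem_bestResponseGraph hT hh hb
    exact ⟨b, hb, (b, t), ⟨hbt, hbmax hbt.2.1⟩, rfl⟩
  have hTB : (T ∩ B).Nonempty := by
    obtain ⟨a, ha, hamin⟩ := hT.exists_isLeast hne
    obtain ⟨t, hat⟩ := exists_mem_bestResponseGraph hT hh ha
    exact ⟨a, ha, (a, t), ⟨hat, hamin hat.2.1⟩, rfl⟩
  obtain ⟨s, hs, ⟨⟨_, t₁⟩, ⟨hG₁, ht₁⟩, rfl⟩, ⟨⟨_, t₂⟩, ⟨hG₂, ht₂⟩, hs₂⟩⟩ :=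
    isPreconnected_closed_iff.mp hconn A B hA hB hcover hTA hTB
  subst hs₂
  exact ⟨_, hs, ⟨t₁, ht₁, hG₁⟩, t₂, ht₂, hG₂⟩

end BestResponse

theorem exists_isMaxOn_diag_of_quasiconcaveOn {T : Set ℝ} {h : ℝ → ℝ → ℝ}
    (hne : T.Nonempty) (hT : IsCompact T) (hconn : IsPreconnected T)
    (hh : ContinuousOn (uncurry h) (T ×ˢ T)) (hqc : ∀ s ∈ T, QuasiconcaveOn ℝ T (h s)) :
    ∃ s ∈ T, IsMaxOn (h s) T s := by
  obtain ⟨s, hs, ⟨t₁, ht₁, -, hG₁⟩, t₂, ht₂, -, hG₂⟩ :=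
    exists_bestResponse_le_and_ge hne hT hconn hh
  exact ⟨s, hs, ((hqc s hs).convex_setOf_isMaxOn.ordConnected.out hG₁ hG₂ ⟨ht₁, ht₂⟩).2⟩

/-- existence of a symmetric Nash equilibrium in a symmetric n-player game on a
compact convex strategy set T ⊆ ℝ, with payoff continuous and quasi-concave in own strategy. -/
theorem symmetric_nash_equilibrium_exists
    {n : ℕ} (hn : 0 < n) (T : Set ℝ)
    (hTne : T.Nonempty) (hTcomp : IsCompact T) (hTconv : Convex ℝ T)
    (u : (Fin n → ℝ) → ℝ) (hu : Continuous u)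
    (hqc : ∀ t ∈ T, QuasiconcaveOn ℝ T
      (fun t₁ => u (Function.update (fun _ => t) (⟨0, hn⟩ : Fin n) t₁))) :
    ∃ ts ∈ T, ∀ t₁ ∈ T,
      u (Function.update (fun _ => ts) (⟨0, hn⟩ : Fin n) t₁) ≤ u (fun _ => ts) := by
  classical
  have hcont : Continuous (uncurry fun s t => u (update (fun _ => s) (⟨0, hn⟩ : Fin n) t)) := by
    fun_prop
  obtain ⟨s, hs, hmax⟩ :=
    exists_isMaxOn_diag_of_quasiconcaveOn hTne hTcomp hTconv.isPreconnected hcont.continuousOn hqc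
  refine ⟨s, hs, fun t ht => ?_⟩
  simpa only [update_eq_self] using isMaxOn_iff.mp hmax t ht
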